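/- arXiv:1804.10827 — 9 statements merged into one kernel-verified Lean document; each statement's English description precedes it below -/
import Mathlib

section
/- Let α > 1 and let μ_i, μ_j, x, y ∈ ℝ^d satisfy α·‖x − μ_i‖ < ‖x − μ_j‖ and α·‖y − μ_j‖ < ‖y − μ_i‖ (as holds when x ∈ C_i and y ∈ C_j in an α-center-proximal clustering). Then ‖x − y‖ > ((α − 1)/(α + 1))·‖μ_i − μ_j‖. -/
/-- Points of distinct clusters in an α-center-proximal clustering are at distance more than
`((α − 1)/(α + 1))‖μi − μj‖` from each other. -/
theorem center_proximity_intercluster_dist (d : ℕ) (α : ℝ) (hα : 1 < α)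
    (μi μj x y : EuclideanSpace ℝ (Fin d))
    (hx : α * ‖x - μi‖ < ‖x - μj‖)
    (hy : α * ‖y - μj‖ < ‖y - μi‖) :
    ((α - 1) / (α + 1)) * ‖μi - μj‖ < ‖x - y‖ := by
  have t1 : ‖x - μj‖ ≤ ‖x - y‖ + ‖y - μj‖ := norm_sub_le_norm_sub_add_norm_sub x y μj
  have t2 : ‖y - μi‖ ≤ ‖y - x‖ + ‖x - μi‖ := norm_sub_le_norm_sub_add_norm_sub y x μi
  have t3 : ‖μi - μj‖ ≤ ‖μi - x‖ + ‖x - μj‖ := norm_sub_le_norm_sub_add_norm_sub μi x μj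
  rw [norm_sub_rev y x] at t2
  rw [norm_sub_rev μi x] at t3
  have ha : (0:ℝ) ≤ ‖x - μi‖ := norm_nonneg _
  have hb : (0:ℝ) ≤ ‖y - μj‖ := norm_nonneg _
  have hα1 : (0:ℝ) < α + 1 := by linarith
  rw [div_mul_eq_mul_div, div_lt_iff₀ hα1]
  nlinarith [norm_nonneg (x - y)]
end

section
/- Let α > 1 and let μ_i, μ_j, x, y ∈ ℝ^d satisfy α·‖x − μ_i‖ < ‖x − μ_j‖ and α·‖y − μ_i‖ < ‖y − μ_j‖ (as holds when x, y ∈ C_i in an α-center-proximal clustering). Then ‖x − y‖ < (2α/(α² − 1))·‖μ_i − μ_j‖. In particular, the diameter of any cluster C_i of an α-center-proximal clustering is at most (2α/(α² − 1))·‖μ_i − μ_j‖ for every j ≠ i. -/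
/-!
For `α > 1` the set `{z | α‖z − μi‖ < ‖z − μj‖}` is the open Apollonius ball with center
`(α² − 1)⁻¹ • (α² • μi − μj)` and radius `α‖μi − μj‖ / (α² − 1)`: expanding the squares gives
`‖α² • u − v‖² − α²‖v − u‖² = (α² − 1)(α²‖u‖² − ‖v‖²)` for `u = z − μi`, `v = z − μj`.
Two points of the ball are closer than its diameter `2α‖μi − μj‖ / (α² − 1)`.
-/

section Apollonius

variable {E : Type*} [NormedAddCommGroup E] [InnerProductSpace ℝ E]

theorem norm_smul_sub_sq_sub_smul_norm_sub_sq (t : ℝ) (u v : E) :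
    ‖t • u - v‖ ^ 2 - t * ‖v - u‖ ^ 2 = (t - 1) * (t * ‖u‖ ^ 2 - ‖v‖ ^ 2) := by
  rw [norm_sub_sq_real, norm_sub_sq_real, norm_smul, real_inner_smul_left, real_inner_comm,
    Real.norm_eq_abs, mul_pow, sq_abs]
  ring

noncomputable def apolloniusCenter (α : ℝ) (a b : E) : E := (α ^ 2 - 1)⁻¹ • (α ^ 2 • a - b)

theorem norm_sub_apolloniusCenter_lt {α : ℝ} (hα : 1 < α) {a b z : E}
    (hz : α * ‖z - a‖ < ‖z - b‖) :
    ‖z - apolloniusCenter α a b‖ < α / (α ^ 2 - 1) * ‖a - b‖ := by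
  have hβ : 0 < α ^ 2 - 1 := by nlinarith
  have hscaled : (α ^ 2 - 1) • (z - apolloniusCenter α a b) = α ^ 2 • (z - a) - (z - b) := by
    rw [apolloniusCenter, smul_sub, smul_inv_smul₀ hβ.ne']
    module
  have hidentity := norm_smul_sub_sq_sub_smul_norm_sub_sq (α ^ 2) (z - a) (z - b)
  rw [← hscaled, norm_smul, Real.norm_eq_abs, abs_of_pos hβ, sub_sub_sub_cancel_left] at hidentity
  have hz_sq : (α * ‖z - a‖) ^ 2 < ‖z - b‖ ^ 2 := by gcongr
  have hsq : ((α ^ 2 - 1) * ‖z - apolloniusCenter α a b‖) ^ 2 < (α * ‖a - b‖) ^ 2 := by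
    nlinarith
  have hlt := lt_of_pow_lt_pow_left₀ 2 (by positivity) hsq
  rw [div_mul_eq_mul_div, lt_div_iff₀ hβ]
  linarith

end Apollonius

/-- Two points of the same cluster of an α-center-proximal clustering are at distance less than
`(2α/(α² − 1))‖μi − μj‖`; in particular the diameter of a cluster `C_i` is at most
`(2α/(α² − 1))‖μi − μj‖` for every `j ≠ i`. -/
theorem center_proximity_cluster_diam (d : ℕ) (α : ℝ) (hα : 1 < α)
    (μi μj x y : EuclideanSpace ℝ (Fin d))
    (hx : α * ‖x - μi‖ < ‖x - μj‖)
    (hy : α * ‖y - μi‖ < ‖y - μj‖) :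
    ‖x - y‖ < (2 * α / (α ^ 2 - 1)) * ‖μi - μj‖ := by
  set c := apolloniusCenter α μi μj
  calc ‖x - y‖
    _ ≤ ‖x - c‖ + ‖y - c‖ := by simpa only [dist_eq_norm] using dist_triangle_right x y c
    _ < α / (α ^ 2 - 1) * ‖μi - μj‖ + α / (α ^ 2 - 1) * ‖μi - μj‖ :=
      add_lt_add (norm_sub_apolloniusCenter_lt hα hx) (norm_sub_apolloniusCenter_lt hα hy)
    _ = (2 * α / (α ^ 2 - 1)) * ‖μi - μj‖ := by ring
end

section
/- Let α > 1, let k ≥ 2, and let C_1,…,C_k be a clustering of a finite set X ⊆ ℝ^d into nonempty clusters with means μ_1,…,μ_k, satisfying α-center proximity. Then max_{i,j ∈ [k]} ‖μ_i − μ_j‖ ≤ diam(X) and diam(X) ≤ ((α + 1)/(α − 1))·max_{i,j ∈ [k]} ‖μ_i − μ_j‖. -/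
/-!
Each mean is a convex combination of points of its cluster, so all means lie in the convex hull
of `X`, which has the same diameter as `X`. Conversely, if `x ∈ C i` and `j ≠ i`, the triangle
inequality and `α`-center proximity give `α ‖x - μ i‖ < ‖x - μ i‖ + ‖μ i - μ j‖`, so every point is
within `M / (α - 1)` of its own mean, where `M` is the largest distance between means. Two points
of `X` are then at distance at most `2 M / (α - 1) + M = ((α + 1) / (α - 1)) M`.
-/

open Finset Metric

theorem Finset.inv_card_smul_sum_mem_convexHull {R E : Type*} [Field R] [LinearOrder R]
    [IsStrictOrderedRing R] [AddCommGroup E] [Module R E] {s : Finset E} (hs : s.Nonempty) :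
    (#s : R)⁻¹ • ∑ x ∈ s, x ∈ convexHull R (s : Set E) := by
  have h := s.centerMass_id_mem_convexHull (w := fun _ => (1 : R)) (fun _ _ => zero_le_one)
    (by simpa using hs.card_pos)
  simpa [Finset.centerMass] using h

theorem dist_le_diam_of_mem_convexHull {E : Type*} [NormedAddCommGroup E] [NormedSpace ℝ E]
    {s : Set E} (hs : s.Finite) {x y : E} (hx : x ∈ convexHull ℝ s) (hy : y ∈ convexHull ℝ s) :
    dist x y ≤ diam s := by
  rw [← convexHull_diam]
  exact dist_le_diam_of_mem (isBounded_convexHull.2 hs.isBounded) hx hy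

theorem sub_one_mul_dist_lt_of_mul_dist_lt {E : Type*} [PseudoMetricSpace E] {α : ℝ}
    {x a b : E} (h : α * dist x a < dist x b) : (α - 1) * dist x a < dist a b := by
  linarith [dist_triangle x a b]

theorem Metric.diam_le_of_forall_exists_dist_le {E ι : Type*} [PseudoMetricSpace E]
    {s : Set E} (hne : s.Nonempty) {c : ι → E} {r M : ℝ} (hc : ∀ i j, dist (c i) (c j) ≤ M)
    (hs : ∀ x ∈ s, ∃ i, dist x (c i) ≤ r) : diam s ≤ r + M + r := by
  refine diam_le_of_forall_dist_le_of_nonempty hne fun x hx y hy => ?_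
  obtain ⟨i, hxi⟩ := hs x hx
  obtain ⟨j, hyj⟩ := hs y hy
  linarith [dist_triangle4 x (c i) (c j) y, hc i j, dist_comm y (c j)]

theorem center_proximity_diam_vs_mean_distances_general
    (d k : ℕ) (hk : 2 ≤ k) (α : ℝ) (hα : 1 < α)
    (X : Finset (EuclideanSpace ℝ (Fin d)))
    (C : Fin k → Finset (EuclideanSpace ℝ (Fin d)))
    (hne : ∀ i, (C i).Nonempty)
    (hcover : ∀ x, x ∈ X ↔ ∃ i, x ∈ C i)
    (μ : Fin k → EuclideanSpace ℝ (Fin d))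
    (hμ : ∀ i, μ i = ((C i).card : ℝ)⁻¹ • ∑ x ∈ C i, x)
    (hprox : ∀ i j, i ≠ j → ∀ x ∈ C i, α * ‖x - μ i‖ < ‖x - μ j‖) :
    (∀ i j, ‖μ i - μ j‖ ≤ Metric.diam (X : Set (EuclideanSpace ℝ (Fin d)))) ∧
    Metric.diam (X : Set (EuclideanSpace ℝ (Fin d))) ≤
      ((α + 1) / (α - 1)) * ⨆ i, ⨆ j, ‖μ i - μ j‖ := by
  have hμ_hull (i : Fin k) : μ i ∈ convexHull ℝ (X : Set (EuclideanSpace ℝ (Fin d))) := by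
    refine convexHull_mono (fun x hx => (hcover x).2 ⟨i, hx⟩) ?_
    rw [hμ i]
    exact Finset.inv_card_smul_sum_mem_convexHull (hne i)
  have hμ_diam (i j : Fin k) : ‖μ i - μ j‖ ≤ diam (X : Set (EuclideanSpace ℝ (Fin d))) := by
    rw [← dist_eq_norm]
    exact dist_le_diam_of_mem_convexHull X.finite_toSet (hμ_hull i) (hμ_hull j)
  refine ⟨hμ_diam, ?_⟩
  set M := ⨆ i, ⨆ j, ‖μ i - μ j‖
  have hM (i j : Fin k) : dist (μ i) (μ j) ≤ M :=
    Finite.le_ciSup_of_le i (Finite.le_ciSup_of_le j (dist_eq_norm _ _).le)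
  have hnear (x) (hx : x ∈ (X : Set (EuclideanSpace ℝ (Fin d)))) :
      ∃ i, dist x (μ i) ≤ M / (α - 1) := by
    obtain ⟨i, hxi⟩ := (hcover x).1 hx
    obtain ⟨j, hji⟩ := Fintype.exists_ne_of_one_lt_card (by rw [Fintype.card_fin]; omega) i
    have h := sub_one_mul_dist_lt_of_mul_dist_lt (a := μ i) (b := μ j)
      (by simpa only [dist_eq_norm] using hprox i j hji.symm x hxi)
    exact ⟨i, (le_div_iff₀' (by linarith)).2 (h.le.trans (hM i j))⟩
  obtain ⟨x, hx⟩ := hne ⟨0, by omega⟩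
  have hα₁ : α - 1 ≠ 0 := by linarith
  calc Metric.diam (X : Set (EuclideanSpace ℝ (Fin d)))
      ≤ M / (α - 1) + M + M / (α - 1) :=
        diam_le_of_forall_exists_dist_le ⟨x, (hcover x).2 ⟨_, hx⟩⟩ hM hnear
    _ = ((α + 1) / (α - 1)) * M := by
        field_simp
        ring

/-- For an α-center-proximal clustering of a finite set `X` into `k ≥ 2` nonempty clusters with
means `μ i`, the largest distance between means is at most `diam X`, and
`diam X ≤ ((α + 1)/(α − 1)) · max_{i,j} ‖μ i − μ j‖`. -/
theorem center_proximity_diam_vs_mean_distances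
    (d k : ℕ) (hk : 2 ≤ k) (α : ℝ) (hα : 1 < α)
    (X : Finset (EuclideanSpace ℝ (Fin d)))
    (C : Fin k → Finset (EuclideanSpace ℝ (Fin d)))
    (hne : ∀ i, (C i).Nonempty)
    (hdisj : ∀ i j, i ≠ j → Disjoint (C i) (C j))
    (hcover : ∀ x, x ∈ X ↔ ∃ i, x ∈ C i)
    (μ : Fin k → EuclideanSpace ℝ (Fin d))
    (hμ : ∀ i, μ i = ((C i).card : ℝ)⁻¹ • ∑ x ∈ C i, x)
    (hprox : ∀ i j, i ≠ j → ∀ x ∈ C i, α * ‖x - μ i‖ < ‖x - μ j‖) :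
    (∀ i j, ‖μ i - μ j‖ ≤ Metric.diam (X : Set (EuclideanSpace ℝ (Fin d)))) ∧
    Metric.diam (X : Set (EuclideanSpace ℝ (Fin d))) ≤
      ((α + 1) / (α - 1)) * ⨆ i, ⨆ j, ‖μ i - μ j‖ :=
  center_proximity_diam_vs_mean_distances_general d k hk α hα X C hne hcover μ hμ hprox
end

section
/- Let α > 1 and δ ≤ (α − 1)²/(8α). Let C_1,…,C_k be a clustering of a finite set X ⊆ ℝ^d into nonempty clusters with means μ_1,…,μ_k, satisfying α-center proximity, and for i ≠ j set r_{i,j} := (α/(α² − 1))·‖μ_i − μ_j‖. Suppose μ̃_1,…,μ̃_k ∈ ℝ^d satisfy ‖μ̃_i − μ_i‖ ≤ 2δ·r_{i,j} for all i ∈ [k] and all j ∈ [k] with j ≠ i. Then for every i ∈ [k], every x ∈ C_i, and every j ∈ [k] with j ≠ i: ‖x − μ̃_i‖ < ‖x − μ̃_j‖. -/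
/-- If each approximate center `μ̃ i` is within `2δ·r_{i,j}` of the true mean `μ i`
(`δ ≤ (α − 1)²/(8α)`, `r_{i,j} = (α/(α² − 1))‖μ i − μ j‖`), then every point of an
α-center-proximal cluster `C i` is strictly closer to `μ̃ i` than to any other `μ̃ j`. -/
theorem approx_centers_correct_assignment
    (d k : ℕ) (α δ : ℝ) (hα : 1 < α) (hδ : δ ≤ (α - 1) ^ 2 / (8 * α))
    (X : Finset (EuclideanSpace ℝ (Fin d)))
    (C : Fin k → Finset (EuclideanSpace ℝ (Fin d)))
    (hne : ∀ i, (C i).Nonempty)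
    (hdisj : ∀ i j, i ≠ j → Disjoint (C i) (C j))
    (hcover : ∀ x, x ∈ X ↔ ∃ i, x ∈ C i)
    (μ : Fin k → EuclideanSpace ℝ (Fin d))
    (hμ : ∀ i, μ i = ((C i).card : ℝ)⁻¹ • ∑ x ∈ C i, x)
    (hprox : ∀ i j, i ≠ j → ∀ x ∈ C i, α * ‖x - μ i‖ < ‖x - μ j‖)
    (μt : Fin k → EuclideanSpace ℝ (Fin d))
    (happrox : ∀ i j, j ≠ i →
      ‖μt i - μ i‖ ≤ 2 * δ * ((α / (α ^ 2 - 1)) * ‖μ i - μ j‖)) :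
    ∀ i, ∀ x ∈ C i, ∀ j, j ≠ i → ‖x - μt i‖ < ‖x - μt j‖ := by
  intro i x hx j hji
  have hij : i ≠ j := hji.symm
  set a := ‖x - μ i‖ with ha
  set b := ‖x - μ j‖ with hb
  set D := ‖μ i - μ j‖ with hD
  have hD' : ‖μ j - μ i‖ = D := norm_sub_rev _ _
  have hab : α * a < b := hprox i j hij x hx
  have hDab : D ≤ a + b := by
    have h1 : μ i - μ j = (μ i - x) + (x - μ j) := by abel
    rw [hD, h1]
    exact (norm_add_le _ _).trans_eq (by rw [norm_sub_rev])
  have hei : ‖μt i - μ i‖ ≤ 2 * δ * ((α / (α ^ 2 - 1)) * D) := happrox i j hji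
  have hej : ‖μt j - μ j‖ ≤ 2 * δ * ((α / (α ^ 2 - 1)) * D) := by
    have := happrox j i hij
    rwa [hD'] at this
  set ei := ‖μt i - μ i‖ with hei'
  set ej := ‖μt j - μ j‖ with hej'
  have hti : ‖x - μt i‖ ≤ a + ei := by
    have h1 : x - μt i = (x - μ i) + (μ i - μt i) := by abel
    rw [h1]
    exact (norm_add_le _ _).trans_eq (by rw [norm_sub_rev (μ i)])
  have htj : b ≤ ‖x - μt j‖ + ej := by
    have h1 : x - μ j = (x - μt j) + (μt j - μ j) := by abel
    rw [hb, h1]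
    exact norm_add_le _ _
  have ha0 : 0 ≤ a := norm_nonneg _
  have hD0 : 0 ≤ D := norm_nonneg _
  have hei0 : 0 ≤ ei := norm_nonneg _
  have hej0 : 0 ≤ ej := norm_nonneg _
  have hα0 : (0:ℝ) < α := lt_trans one_pos hα
  have hα2 : (0:ℝ) < α ^ 2 - 1 := by nlinarith
  have hδ8 : 8 * α * δ ≤ (α - 1) ^ 2 := by
    rw [le_div_iff₀ (by positivity : (0:ℝ) < 8 * α)] at hδ
    linarith
  have heq : 2 * δ * ((α / (α ^ 2 - 1)) * D) = 2 * δ * α * D / (α ^ 2 - 1) := by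
    ring
  rw [heq] at hei hej
  have heiD : (α ^ 2 - 1) * ei ≤ 2 * δ * α * D := by
    have := (le_div_iff₀ hα2).mp hei
    linarith
  have hejD : (α ^ 2 - 1) * ej ≤ 2 * δ * α * D := by
    have := (le_div_iff₀ hα2).mp hej
    linarith
  have key : ei + ej < b - a := by
    nlinarith [mul_nonneg hD0 ha0, mul_nonneg ha0 ha0,
      mul_pos hα0 (lt_of_le_of_lt (by nlinarith : (0:ℝ) ≤ α * a) hab),
      mul_nonneg (mul_nonneg hD0 ha0) (le_of_lt hα0)]
  linarith
end

section
/- Let α > 1 and δ ≤ (α − 1)²/(8α). Let C_1,…,C_k (k ≥ 2) be a clustering of a finite set X ⊆ ℝ^d into nonempty clusters with means μ_1,…,μ_k, satisfying α-center proximity, and for i ≠ j set r_{i,j} := (α/(α² − 1))·‖μ_i − μ_j‖. Suppose μ̃_1,…,μ̃_k ∈ ℝ^d satisfy ‖μ̃_i − μ_i‖ ≤ 2δ·r_{i,j} for all i ∈ [k] and all j ≠ i. Then assigning each point of X to its (strictly) nearest approximate center exactly recovers the clustering: for every i ∈ [k], C_i = { x ∈ X : ‖x − μ̃_i‖ < ‖x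 − μ̃_j‖ for all j ≠ i }. -/
/-- Estimating the means suffices for exact cluster recovery: if each approximate center `μ̃ i`
is within `2δ·r_{i,j}` of the true mean `μ i` (`δ ≤ (α − 1)²/(8α)`), then assigning each point
of `X` to its strictly nearest approximate center exactly recovers the α-center-proximal
clustering. -/
theorem approx_centers_recover_clustering
    (d k : ℕ) (hk : 2 ≤ k) (α δ : ℝ) (hα : 1 < α) (hδ : δ ≤ (α - 1) ^ 2 / (8 * α))
    (X : Finset (EuclideanSpace ℝ (Fin d)))
    (C : Fin k → Finset (EuclideanSpace ℝ (Fin d)))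
    (hne : ∀ i, (C i).Nonempty)
    (hdisj : ∀ i j, i ≠ j → Disjoint (C i) (C j))
    (hcover : ∀ x, x ∈ X ↔ ∃ i, x ∈ C i)
    (μ : Fin k → EuclideanSpace ℝ (Fin d))
    (hμ : ∀ i, μ i = ((C i).card : ℝ)⁻¹ • ∑ x ∈ C i, x)
    (hprox : ∀ i j, i ≠ j → ∀ x ∈ C i, α * ‖x - μ i‖ < ‖x - μ j‖)
    (μt : Fin k → EuclideanSpace ℝ (Fin d))
    (happrox : ∀ i j, j ≠ i →
      ‖μt i - μ i‖ ≤ 2 * δ * ((α / (α ^ 2 - 1)) * ‖μ i - μ j‖)) :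
    ∀ i, (C i : Set (EuclideanSpace ℝ (Fin d))) =
      {x | x ∈ X ∧ ∀ j, j ≠ i → ‖x - μt i‖ < ‖x - μt j‖} := by
  have hα0 : (0:ℝ) < α := lt_trans one_pos hα
  have hα2 : (0:ℝ) < α ^ 2 - 1 := by nlinarith
  -- main lemma
  have main : ∀ i j, j ≠ i → ∀ x ∈ C i, ‖x - μt i‖ < ‖x - μt j‖ := by
    intro i j hji x hx
    have hij : i ≠ j := fun h => hji h.symm
    set a := ‖x - μ i‖ with ha
    set b := ‖x - μ j‖ with hb
    set D := ‖μ i - μ j‖ with hD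
    have hab : α * a < b := hprox i j hij x hx
    have ha0 : 0 ≤ a := norm_nonneg _
    have htri : D ≤ a + b := by
      calc D = ‖(μ i - x) + (x - μ j)‖ := by rw [hD, sub_add_sub_cancel]
        _ ≤ ‖μ i - x‖ + ‖x - μ j‖ := norm_add_le _ _
        _ = a + b := by rw [norm_sub_rev (μ i) x]
    have hDpos : 0 < D := by
      rcases lt_or_eq_of_le (norm_nonneg (μ i - μ j)) with h | h
      · exact h
      · exfalso
        have hμij : μ i = μ j := by
          have := (norm_eq_zero.mp h.symm)
          exact sub_eq_zero.mp this
        have : b = a := by rw [hb, ha, hμij]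
        nlinarith
    have hεi : ‖μt i - μ i‖ ≤ 2 * δ * ((α / (α ^ 2 - 1)) * D) := happrox i j hji
    have hεj : ‖μt j - μ j‖ ≤ 2 * δ * ((α / (α ^ 2 - 1)) * D) := by
      have := happrox j i hij
      rwa [norm_sub_rev (μ j) (μ i)] at this
    set εi := ‖μt i - μ i‖ with hei
    set εj := ‖μt j - μ j‖ with hej
    have hεi0 : 0 ≤ εi := norm_nonneg _
    have hεj0 : 0 ≤ εj := norm_nonneg _
    have h1 : ‖x - μt i‖ ≤ a + εi := by
      calc ‖x - μt i‖ = ‖(x - μ i) + (μ i - μt i)‖ := by rw [sub_add_sub_cancel]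
        _ ≤ ‖x - μ i‖ + ‖μ i - μt i‖ := norm_add_le _ _
        _ = a + εi := by rw [norm_sub_rev (μ i) (μt i)]
    have h2 : b ≤ ‖x - μt j‖ + εj := by
      calc b = ‖(x - μt j) + (μt j - μ j)‖ := by rw [hb, sub_add_sub_cancel]
        _ ≤ ‖x - μt j‖ + ‖μt j - μ j‖ := norm_add_le _ _
    -- arithmetic
    have hδ' : 8 * α * δ ≤ (α - 1) ^ 2 := by
      rw [le_div_iff₀ (by positivity : (0:ℝ) < 8 * α)] at hδ
      linarith
    have hεsum : (α ^ 2 - 1) * (εi + εj) ≤ (α - 1) ^ 2 * D / 2 := by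
      have h3 : εi + εj ≤ 4 * δ * (α / (α ^ 2 - 1)) * D := by nlinarith
      have h4 : (α ^ 2 - 1) * (4 * δ * (α / (α ^ 2 - 1)) * D) = 4 * δ * α * D := by
        field_simp
      nlinarith [mul_le_mul_of_nonneg_left h3 (le_of_lt hα2)]
    have hba : (α + 1) * (b - a) > (α - 1) * D := by nlinarith
    have key : εi + εj < b - a := by nlinarith [mul_lt_mul_of_pos_left hba (by linarith : (0:ℝ) < α - 1)]
    linarith
  intro i
  ext x
  simp only [Finset.coe_sort_coe, Set.mem_setOf_eq, Finset.mem_coe]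
  constructor
  · intro hx
    exact ⟨(hcover x).mpr ⟨i, hx⟩, fun j hj => main i j hj x hx⟩
  · rintro ⟨hxX, hmin⟩
    obtain ⟨j, hxj⟩ := (hcover x).mp hxX
    by_cases hji : j = i
    · exact hji ▸ hxj
    · exact absurd (main j i (fun h => hji h.symm) x hxj) (not_lt.mpr (le_of_lt (hmin j hji)))
end

section
/- Let α > 1, let C_1,…,C_k be finite nonempty sets of points in ℝ^d with respective means μ_1,…,μ_k, and let Z ⊆ ℝ^d be a finite set of outliers such that for all i, j ∈ [k], all x ∈ C_i, and all q ∈ Z: ‖q − μ_j‖ > α·‖x − μ_i‖ (i.e., the clustering with outliers Z satisfies α-center proximity with outliers). Then for every q ∈ Z and all i, j ∈ [k]: ‖q − μ_j‖ ≥ α·(diam(C_i) + diam(C_j))/4. -/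
/-- Under α-center proximity with outliers, every outlier `q` satisfies
`‖q − μ j‖ ≥ α·(diam C i + diam C j)/4` for all clusters `i, j`. -/
theorem outlier_far_from_centers
    (d k : ℕ) (α : ℝ) (hα : 1 < α)
    (C : Fin k → Finset (EuclideanSpace ℝ (Fin d)))
    (hne : ∀ i, (C i).Nonempty)
    (μ : Fin k → EuclideanSpace ℝ (Fin d))
    (hμ : ∀ i, μ i = ((C i).card : ℝ)⁻¹ • ∑ x ∈ C i, x)
    (Z : Finset (EuclideanSpace ℝ (Fin d)))
    (houtlier : ∀ i j, ∀ x ∈ C i, ∀ q ∈ Z, α * ‖x - μ i‖ < ‖q - μ j‖) :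
    ∀ q ∈ Z, ∀ i j,
      α * (Metric.diam (C i : Set (EuclideanSpace ℝ (Fin d))) +
           Metric.diam (C j : Set (EuclideanSpace ℝ (Fin d)))) / 4 ≤ ‖q - μ j‖ := by
  intro q hq i j
  have hα0 : (0 : ℝ) < α := lt_trans one_pos hα
  have key : ∀ l : Fin k,
      α * Metric.diam (C l : Set (EuclideanSpace ℝ (Fin d))) ≤ 2 * ‖q - μ j‖ := by
    intro l
    have hdiam : Metric.diam (C l : Set (EuclideanSpace ℝ (Fin d)))
        ≤ 2 * (‖q - μ j‖ / α) := by
      apply Metric.diam_le_of_forall_dist_le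
      · positivity
      · intro u hu v hv
        have hu' : ‖u - μ l‖ ≤ ‖q - μ j‖ / α := by
          have := houtlier l j u (by exact_mod_cast hu) q hq
          rw [le_div_iff₀ hα0]; linarith [this]
        have hv' : ‖v - μ l‖ ≤ ‖q - μ j‖ / α := by
          have := houtlier l j v (by exact_mod_cast hv) q hq
          rw [le_div_iff₀ hα0]; linarith [this]
        calc dist u v ≤ dist u (μ l) + dist (μ l) v := dist_triangle _ _ _
          _ = ‖u - μ l‖ + ‖v - μ l‖ := by
              rw [dist_eq_norm, dist_eq_norm, norm_sub_rev (μ l) v]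
          _ ≤ ‖q - μ j‖ / α + ‖q - μ j‖ / α := add_le_add hu' hv'
          _ = 2 * (‖q - μ j‖ / α) := by ring
    calc α * Metric.diam (C l : Set (EuclideanSpace ℝ (Fin d)))
        ≤ α * (2 * (‖q - μ j‖ / α)) := by
          exact mul_le_mul_of_nonneg_left hdiam (le_of_lt hα0)
      _ = 2 * ‖q - μ j‖ := by field_simp
  have hi := key i
  have hj := key j
  nlinarith [hi, hj]
end

section
/- Let α > 1 and δ ≤ (α − 1)²/(8α). Let C_1,…,C_k be finite nonempty sets of points in ℝ^d with respective means μ_1,…,μ_k, and let Z be a finite outlier set such that for all i, j ∈ [k], all x ∈ C_i, and all q ∈ Z: ‖q − μ_j‖ > α·‖x − μ_i‖. Suppose μ̃_1,…,μ̃_k ∈ ℝ^d satisfy ‖μ̃_i − μ_i‖ ≤ δ·diam(C_i) for each i ∈ [k]. Then for every q ∈ Z, every i, j ∈ [k], and every x ∈ C_i: ‖x − μ̃_i‖ < ‖q − μ̃_j‖. In particular, the |Z| points farthest from the approximate centers are exactly the outliers. -/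
/-- With approximate centers `μ̃ i` within `δ·diam(C i)` of the true means
(`δ ≤ (α − 1)²/(8α)`), every inlier is strictly closer to its own approximate center than any
outlier is to any approximate center; hence the `|Z|` farthest points are exactly the
outliers. -/
theorem outliers_farthest_from_approx_centers
    (d k : ℕ) (α δ : ℝ) (hα : 1 < α) (hδ : δ ≤ (α - 1) ^ 2 / (8 * α))
    (C : Fin k → Finset (EuclideanSpace ℝ (Fin d)))
    (hne : ∀ i, (C i).Nonempty)
    (μ : Fin k → EuclideanSpace ℝ (Fin d))
    (hμ : ∀ i, μ i = ((C i).card : ℝ)⁻¹ • ∑ x ∈ C i, x)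
    (Z : Finset (EuclideanSpace ℝ (Fin d)))
    (houtlier : ∀ i j, ∀ x ∈ C i, ∀ q ∈ Z, α * ‖x - μ i‖ < ‖q - μ j‖)
    (μt : Fin k → EuclideanSpace ℝ (Fin d))
    (happrox : ∀ i, ‖μt i - μ i‖ ≤ δ * Metric.diam (C i : Set (EuclideanSpace ℝ (Fin d)))) :
    ∀ q ∈ Z, ∀ i j, ∀ x ∈ C i, ‖x - μt i‖ < ‖q - μt j‖ := by
  intro q hq i j x hx
  have hα0 : (0:ℝ) < α := by linarith
  set δ0 : ℝ := (α - 1) ^ 2 / (8 * α) with hδ0def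
  have hδ00 : 0 ≤ δ0 := by positivity
  have hδ0le : 4 * δ0 ≤ α - 1 := by
    rw [hδ0def, ← mul_div_assoc, div_le_iff₀ (by positivity : (0:ℝ) < 8 * α)]
    nlinarith [sq_nonneg (α - 1)]
  set D : ℝ := ‖q - μ j‖ with hD
  have hDpos : 0 < D := lt_of_le_of_lt (by positivity) (houtlier i j x hx q hq)
  -- diameter bound
  have hdiam : ∀ l : Fin k, Metric.diam (C l : Set (EuclideanSpace ℝ (Fin d))) ≤ 2 / α * D := by
    intro l
    obtain ⟨y, hy, hymax⟩ := Finset.exists_max_image (C l) (fun z => ‖z - μ l‖) (hne l)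
    have hyq : α * ‖y - μ l‖ < D := houtlier l j y hy q hq
    apply Metric.diam_le_of_forall_dist_le (by positivity)
    intro u hu v hv
    simp only [Finset.mem_coe] at hu hv
    have h1 : ‖u - μ l‖ ≤ ‖y - μ l‖ := hymax u hu
    have h2 : ‖v - μ l‖ ≤ ‖y - μ l‖ := hymax v hv
    have h3 : dist u v ≤ ‖u - μ l‖ + ‖v - μ l‖ := by
      rw [dist_eq_norm]
      calc ‖u - v‖ = ‖(u - μ l) - (v - μ l)‖ := by rw [sub_sub_sub_cancel_right]
        _ ≤ ‖u - μ l‖ + ‖v - μ l‖ := norm_sub_le _ _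
    have : 2 * (α * ‖y - μ l‖) ≤ 2 * D := by linarith
    rw [div_mul_eq_mul_div, le_div_iff₀ hα0]
    nlinarith
  have hdi := hdiam i
  have hdj := hdiam j
  have hdi0 : 0 ≤ Metric.diam (C i : Set (EuclideanSpace ℝ (Fin d))) := Metric.diam_nonneg
  have hdj0 : 0 ≤ Metric.diam (C j : Set (EuclideanSpace ℝ (Fin d))) := Metric.diam_nonneg
  have hai : ‖μt i - μ i‖ ≤ δ0 * (2 / α * D) := by
    calc ‖μt i - μ i‖ ≤ δ * Metric.diam (C i : Set (EuclideanSpace ℝ (Fin d))) := happrox i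
      _ ≤ δ0 * Metric.diam (C i : Set (EuclideanSpace ℝ (Fin d))) :=
        mul_le_mul_of_nonneg_right hδ hdi0
      _ ≤ δ0 * (2 / α * D) := mul_le_mul_of_nonneg_left hdi hδ00
  have haj : ‖μt j - μ j‖ ≤ δ0 * (2 / α * D) := by
    calc ‖μt j - μ j‖ ≤ δ * Metric.diam (C j : Set (EuclideanSpace ℝ (Fin d))) := happrox j
      _ ≤ δ0 * Metric.diam (C j : Set (EuclideanSpace ℝ (Fin d))) :=
        mul_le_mul_of_nonneg_right hδ hdj0
      _ ≤ δ0 * (2 / α * D) := mul_le_mul_of_nonneg_left hdj hδ00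
  have hx1 : ‖x - μt i‖ ≤ ‖x - μ i‖ + ‖μt i - μ i‖ := by
    calc ‖x - μt i‖ = ‖(x - μ i) - (μt i - μ i)‖ := by rw [sub_sub_sub_cancel_right]
      _ ≤ ‖x - μ i‖ + ‖μt i - μ i‖ := norm_sub_le _ _
  have hq1 : D ≤ ‖q - μt j‖ + ‖μt j - μ j‖ := by
    calc D = ‖(q - μt j) + (μt j - μ j)‖ := by rw [sub_add_sub_cancel]
      _ ≤ ‖q - μt j‖ + ‖μt j - μ j‖ := norm_add_le _ _
  have hxμ : α * ‖x - μ i‖ < D := houtlier i j x hx q hq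
  have hxn : 0 ≤ ‖x - μ i‖ := norm_nonneg _
  have hEd : α * (2 / α * D) = 2 * D := by field_simp
  nlinarith [mul_le_mul_of_nonneg_left hδ0le hDpos.le, mul_pos hDpos hα0,
    mul_nonneg hδ00 hDpos.le]
end

section
/- Let d ≥ 1, let v, u_1, …, u_m be m + 1 pairwise distinct coordinate indices in [d] (m ≥ 1), let e_s denote the s-th standard basis vector of ℝ^d, and set x_i := e_v + e_{u_i} for i = 1,…,m (the data points associated with the m edges covered by vertex v in the k-means instance built from a triangle-free graph). Let μ := (1/m)·∑_{i=1}^m x_i. Then ∑_{i=1}^m ‖x_i − μ‖² = m − 1. -/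
/-!
The k-means cost of a cluster is `∑ ‖x i‖² - ‖∑ x i‖² / m`, so it depends only on the Gram
matrix of the points. For the edge points `e v + e (u i)` the Gram matrix is `J + I`, which gives
`2m - (m² + m) / m = m - 1`.
-/

open Finset RealInnerProductSpace

section

variable {ι E : Type*} [Fintype ι] [NormedAddCommGroup E] [InnerProductSpace ℝ E]

theorem sum_norm_sub_mean_sq (x : ι → E) :
    ∑ i, ‖x i - (Fintype.card ι : ℝ)⁻¹ • ∑ j, x j‖ ^ 2 =
      ∑ i, ‖x i‖ ^ 2 - (Fintype.card ι : ℝ)⁻¹ * ‖∑ i, x i‖ ^ 2 := by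
  rcases eq_or_ne (Fintype.card ι : ℝ) 0 with hn | hn
  · simp [hn]
  simp only [norm_sub_sq_real, sum_add_distrib, sum_sub_distrib, ← mul_sum, ← sum_inner,
    sum_const, card_univ, nsmul_eq_mul, real_inner_smul_right, norm_smul,
    real_inner_self_eq_norm_sq, Real.norm_eq_abs, abs_inv, Nat.abs_cast]
  field_simp
  ring

theorem norm_sum_sq_eq_sum_inner (x : ι → E) :
    ‖∑ i, x i‖ ^ 2 = ∑ i, ∑ j, ⟪x i, x j⟫ := by
  rw [← real_inner_self_eq_norm_sq, sum_inner]
  simp only [inner_sum]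

theorem sum_norm_sub_mean_sq_of_inner_eq_one_add_ite [DecidableEq ι] [Nonempty ι] {x : ι → E}
    (hx : ∀ i j, ⟪x i, x j⟫ = 1 + if i = j then 1 else 0) :
    ∑ i, ‖x i - (Fintype.card ι : ℝ)⁻¹ • ∑ j, x j‖ ^ 2 = Fintype.card ι - 1 := by
  have hn : (Fintype.card ι : ℝ) ≠ 0 := by positivity
  rw [sum_norm_sub_mean_sq, norm_sum_sq_eq_sum_inner]
  simp only [← real_inner_self_eq_norm_sq, hx, if_true, sum_add_distrib, sum_ite_eq,
    mem_univ, sum_const, card_univ, nsmul_eq_mul]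
  field_simp
  ring

end

theorem Orthonormal.inner_add_add {κ ι E : Type*} [SeminormedAddCommGroup E]
    [InnerProductSpace ℝ E] {e : κ → E} (he : Orthonormal ℝ e) {v : κ} {u : ι → κ}
    (hu : Function.Injective u) (huv : ∀ i, u i ≠ v) [DecidableEq ι] (i j : ι) :
    ⟪e v + e (u i), e v + e (u j)⟫ = 1 + if i = j then 1 else 0 := by
  classical
  simp only [inner_add_left, inner_add_right, orthonormal_iff_ite.mp he, huv, (huv _).symm,
    hu.eq_iff, if_true, if_false]
  ring

/-- In the Vertex-Cover-to-k-means reduction, the cluster of the `m` edge-points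
`x i = e v + e (u i)` (with `v`, `u 1`, …, `u m` pairwise distinct coordinates) has k-means cost
`∑ i ‖x i − μ‖² = m − 1`, where `μ` is its mean. -/
theorem vertex_cover_cluster_cost
    (d m : ℕ) (hm : 1 ≤ m)
    (v : Fin d) (u : Fin m → Fin d)
    (hu : Function.Injective u) (huv : ∀ i, u i ≠ v)
    (x : Fin m → EuclideanSpace ℝ (Fin d))
    (hx : ∀ i, x i = EuclideanSpace.single v (1 : ℝ) + EuclideanSpace.single (u i) (1 : ℝ))
    (μ : EuclideanSpace ℝ (Fin d)) (hμ : μ = (m : ℝ)⁻¹ • ∑ i, x i) :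
    ∑ i, ‖x i - μ‖ ^ 2 = (m : ℝ) - 1 := by
  have : Nonempty (Fin m) := ⟨⟨0, hm⟩⟩
  have hgram : ∀ i j, ⟪x i, x j⟫ = 1 + if i = j then 1 else 0 := fun i j => by
    rw [hx, hx]
    exact EuclideanSpace.orthonormal_single.inner_add_add hu huv i j
  simpa [hμ] using sum_norm_sub_mean_sq_of_inner_eq_one_add_ite hgram
end

section
/- Let k ≥ 1 and m ≥ 2 be integers, let d = km, let X = {e_1, …, e_d} be the set of standard basis vectors of ℝ^d, and let C_1,…,C_k be any partition of X into clusters of exactly m points each, with means μ_1,…,μ_k. Then for every i ∈ [k] and every x ∈ C_i: ‖x − μ_i‖² = 1 − 1/m and ‖x − μ_j‖² = 1 + 1/m for every j ≠ i. Consequently, for every α with 1 < α < √((m + 1)/(m − 1)), every such partition satisfies α-center proximity. -/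
/-!
For an orthonormal set `S` and a finite `T ⊆ S` with mean `μ_T`, orthonormality gives
`⟪x, μ_T⟫ = 1/|T|` or `0` according as `x ∈ T` or not, and `‖μ_T‖² = 1/|T|`. Expanding
`‖x - μ_T‖² = ‖x‖² - 2⟪x, μ_T⟫ + ‖μ_T‖²`, a basis vector is at squared distance `1 - 1/m` from
the mean of its own cluster of size `m` and `1 + 1/m` from the mean of any other, and the ratio of
these is `(m + 1)/(m - 1)`.
-/

open Finset RealInnerProductSpace

section Orthonormal

variable {E : Type*} [NormedAddCommGroup E] [InnerProductSpace ℝ E] {S : Set E}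

open Classical in
theorem Orthonormal.inner_mean_eq_ite (hS : Orthonormal ℝ (Subtype.val : S → E))
    {T : Finset E} (hT : ↑T ⊆ S) {x : E} (hx : x ∈ S) :
    ⟪x, (#T : ℝ)⁻¹ • ∑ y ∈ T, y⟫ = if x ∈ T then (#T : ℝ)⁻¹ else 0 := by
  have hδ : ∀ y ∈ T, ⟪x, y⟫ = if x = y then 1 else 0 :=
    fun y hy => orthonormal_subtype_iff_ite.mp hS x hx y (hT hy)
  rw [real_inner_smul_right, inner_sum, sum_congr rfl hδ, sum_ite_eq]
  split_ifs <;> simp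

theorem Orthonormal.norm_mean_sq (hS : Orthonormal ℝ (Subtype.val : S → E))
    {T : Finset E} (hT : ↑T ⊆ S) :
    ‖(#T : ℝ)⁻¹ • ∑ y ∈ T, y‖ ^ 2 = (#T : ℝ)⁻¹ := by
  have hterm : ∀ y ∈ T, ⟪y, (#T : ℝ)⁻¹ • ∑ z ∈ T, z⟫ = (#T : ℝ)⁻¹ := fun y hy => by
    rw [hS.inner_mean_eq_ite hT (hT hy), if_pos hy]
  rw [← real_inner_self_eq_norm_sq, real_inner_smul_left, sum_inner, sum_congr rfl hterm,
    sum_const, nsmul_eq_mul]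
  rcases (#T).eq_zero_or_pos with h | h
  · simp [h]
  · field_simp

theorem Orthonormal.norm_sub_mean_sq_of_mem (hS : Orthonormal ℝ (Subtype.val : S → E))
    {T : Finset E} (hT : ↑T ⊆ S) {x : E} (hx : x ∈ T) :
    ‖x - (#T : ℝ)⁻¹ • ∑ y ∈ T, y‖ ^ 2 = 1 - 1 / (#T : ℝ) := by
  rw [norm_sub_sq_real, hS.norm_mean_sq hT, hS.inner_mean_eq_ite hT (hT hx), if_pos hx,
    hS.norm_eq_one ⟨x, hT hx⟩]
  ring

theorem Orthonormal.norm_sub_mean_sq_of_notMem (hS : Orthonormal ℝ (Subtype.val : S → E))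
    {T : Finset E} (hT : ↑T ⊆ S) {x : E} (hxS : x ∈ S) (hxT : x ∉ T) :
    ‖x - (#T : ℝ)⁻¹ • ∑ y ∈ T, y‖ ^ 2 = 1 + 1 / (#T : ℝ) := by
  rw [norm_sub_sq_real, hS.norm_mean_sq hT, hS.inner_mean_eq_ite hT hxS, if_neg hxT,
    hS.norm_eq_one ⟨x, hxS⟩]
  ring

end Orthonormal

theorem mul_lt_of_lt_sqrt_sq_div_sq {α a b : ℝ} (ha : 0 < a) (hb : 0 ≤ b)
    (hα : α < √(b ^ 2 / a ^ 2)) : α * a < b := by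
  rw [← div_pow, Real.sqrt_sq (div_nonneg hb ha.le)] at hα
  exact (lt_div_iff₀ ha).mp hα

theorem basis_partition_center_proximal_general
    (k m d : ℕ) (hm : 2 ≤ m)
    (C : Fin k → Finset (EuclideanSpace ℝ (Fin d)))
    (hdisj : ∀ i j, i ≠ j → Disjoint (C i) (C j))
    (hcover : ∀ x, (∃ i, x ∈ C i) ↔ ∃ s : Fin d, x = EuclideanSpace.single s (1 : ℝ))
    (hcard : ∀ i, (C i).card = m)
    (μ : Fin k → EuclideanSpace ℝ (Fin d))
    (hμ : ∀ i, μ i = ((C i).card : ℝ)⁻¹ • ∑ x ∈ C i, x) :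
    (∀ i, ∀ x ∈ C i, ‖x - μ i‖ ^ 2 = 1 - 1 / (m : ℝ) ∧
      ∀ j, j ≠ i → ‖x - μ j‖ ^ 2 = 1 + 1 / (m : ℝ)) ∧
    (∀ α : ℝ, 1 < α → α < Real.sqrt (((m : ℝ) + 1) / ((m : ℝ) - 1)) →
      ∀ i j, i ≠ j → ∀ x ∈ C i, α * ‖x - μ i‖ < ‖x - μ j‖) := by
  have hS := (EuclideanSpace.orthonormal_single (𝕜 := ℝ) (ι := Fin d)).toSubtypeRange
  have hCS : ∀ i, ↑(C i) ⊆ Set.range fun s : Fin d => EuclideanSpace.single s (1 : ℝ) :=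
    fun i x hx => ((hcover x).mp ⟨i, hx⟩).imp fun _ => Eq.symm
  have hdist : ∀ i, ∀ x ∈ C i, ‖x - μ i‖ ^ 2 = 1 - 1 / (m : ℝ) ∧
      ∀ j, j ≠ i → ‖x - μ j‖ ^ 2 = 1 + 1 / (m : ℝ) := fun i x hx =>
    ⟨by rw [hμ, hS.norm_sub_mean_sq_of_mem (hCS i) hx, hcard], fun j hji => by
      rw [hμ, hS.norm_sub_mean_sq_of_notMem (hCS j) (hCS i hx)
        (Finset.disjoint_left.mp (hdisj i j hji.symm) hx), hcard]⟩
  have hm' : (2 : ℝ) ≤ m := by exact_mod_cast hm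
  refine ⟨hdist, fun α _ hα i j hij x hx => mul_lt_of_lt_sqrt_sq_div_sq ?_ (norm_nonneg _) ?_⟩
  · have hsq : 0 < ‖x - μ i‖ ^ 2 := by
      rw [(hdist i x hx).1, sub_pos, div_lt_one (by linarith)]
      linarith
    exact (norm_nonneg _).lt_of_ne' (sq_pos_iff.mp hsq)
  · have hratio : (1 + 1 / (m : ℝ)) / (1 - 1 / m) = (m + 1) / (m - 1) := by
      field_simp
    rwa [(hdist i x hx).1, (hdist i x hx).2 j hij.symm, hratio]

/-- Core computation for the exponential lower bound on the number of optimal α-center-proximal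
balanced clusterings: any partition of the `d = k·m` standard basis vectors of `ℝ^d` into `k`
clusters of exactly `m` points each satisfies `‖x − μ i‖² = 1 − 1/m` for `x ∈ C i` and
`‖x − μ j‖² = 1 + 1/m` for `j ≠ i`, and hence is α-center proximal for every
`1 < α < √((m + 1)/(m − 1))`. -/
theorem basis_partition_center_proximal
    (k m d : ℕ) (hk : 1 ≤ k) (hm : 2 ≤ m) (hd : d = k * m)
    (C : Fin k → Finset (EuclideanSpace ℝ (Fin d)))
    (hdisj : ∀ i j, i ≠ j → Disjoint (C i) (C j))
    (hcover : ∀ x, (∃ i, x ∈ C i) ↔ ∃ s : Fin d, x = EuclideanSpace.single s (1 : ℝ))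
    (hcard : ∀ i, (C i).card = m)
    (μ : Fin k → EuclideanSpace ℝ (Fin d))
    (hμ : ∀ i, μ i = ((C i).card : ℝ)⁻¹ • ∑ x ∈ C i, x) :
    (∀ i, ∀ x ∈ C i, ‖x - μ i‖ ^ 2 = 1 - 1 / (m : ℝ) ∧
      ∀ j, j ≠ i → ‖x - μ j‖ ^ 2 = 1 + 1 / (m : ℝ)) ∧
    (∀ α : ℝ, 1 < α → α < Real.sqrt (((m : ℝ) + 1) / ((m : ℝ) - 1)) →
      ∀ i j, i ≠ j → ∀ x ∈ C i, α * ‖x - μ i‖ < ‖x - μ j‖) :=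
  basis_partition_center_proximal_general k m d hm C hdisj hcover hcard μ hμ
end
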